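/- arXiv:1806.03810 — 3 statements merged into one kernel-verified Lean document; each statement's English description precedes it below -/
import Mathlib

section
/- Let ẽ_j, j = 1,…,N, be random vectors in R^n with E[ẽ_j ẽ_j^T] ≤ P̃_j where each P̃_j is positive definite. Let a_1,…,a_N be nonnegative weights summing to 1, define P = (∑_j a_j P̃_j^{-1})^{-1} and e = P ∑_j a_j P̃_j^{-1} ẽ_j. Then E[e e^T] ≤ P (consistency of covariance-intersection fusion). -/
open Matrix MeasureTheory

/-!
Both sides of `E[e eᵀ] ≤ P` are compared through their quadratic forms. Fix `x` and put
`w = P x`; then `xᵀ e = ∑ⱼ aⱼ dⱼ` with `dⱼ = (P̃ⱼ⁻¹ w)ᵀ ẽⱼ`. Convexity of the square gives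
`E[(xᵀ e)²] ≤ ∑ⱼ aⱼ E[dⱼ²]`, consistency of each `ẽⱼ` bounds `E[dⱼ²]` by
`(P̃ⱼ⁻¹ w)ᵀ P̃ⱼ (P̃ⱼ⁻¹ w) = wᵀ P̃ⱼ⁻¹ w`, and `∑ⱼ aⱼ wᵀ P̃ⱼ⁻¹ w = wᵀ P⁻¹ w = xᵀ P x`.
-/

/-- Entrywise expectation of the outer product `X Yᵀ` of two random vectors. -/
noncomputable def Eouter {Ω : Type*} [MeasurableSpace Ω] (μ : Measure Ω) {n m : ℕ}
    (X : Ω → Fin n → ℝ) (Y : Ω → Fin m → ℝ) : Matrix (Fin n) (Fin m) ℝ :=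
  Matrix.of fun i j => ∫ ω, X ω i * Y ω j ∂μ

theorem Matrix.posDef_sum_smul {m ι : Type*} [Fintype ι] {M : ι → Matrix m m ℝ}
    (hM : ∀ j, (M j).PosDef) {a : ι → ℝ} (ha : ∀ j, 0 ≤ a j) (hpos : ∃ j, 0 < a j) :
    (∑ j, a j • M j).PosDef := by
  classical
  obtain ⟨j₀, hj₀⟩ := hpos
  rw [← Finset.add_sum_erase _ _ (Finset.mem_univ j₀)]
  exact ((hM j₀).smul hj₀).add_posSemidef
    (posSemidef_sum _ fun j _ => (hM j).posSemidef.smul (ha j))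

section LinearAlgebra

variable {m : Type*} [Fintype m]

theorem Matrix.IsHermitian.dotProduct_mulVec_comm {R : Type*} [CommSemiring R] [StarRing R]
    [TrivialStar R] {M : Matrix m m R} (hM : M.IsHermitian) (x y : m → R) :
    x ⬝ᵥ (M *ᵥ y) = (M *ᵥ x) ⬝ᵥ y := by
  rw [dotProduct_mulVec, ← mulVec_transpose, (isHermitian_iff_isSymm.mp hM).eq]

theorem Matrix.inv_mulVec_dotProduct_mulVec_inv_mulVec {R : Type*} [CommRing R] [DecidableEq m]
    {P : Matrix m m R} (hP : IsUnit P) (x : m → R) :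
    (P⁻¹ *ᵥ x) ⬝ᵥ (P *ᵥ (P⁻¹ *ᵥ x)) = x ⬝ᵥ (P⁻¹ *ᵥ x) := by
  rw [mulVec_mulVec, mul_nonsing_inv _ ((isUnit_iff_isUnit_det P).mp hP), one_mulVec,
    dotProduct_comm]

theorem Matrix.dotProduct_sum_smul_mulVec {R : Type*} [CommSemiring R] {ι : Type*} [Fintype ι]
    (a : ι → R) (M : ι → Matrix m m R) (x : m → R) :
    x ⬝ᵥ ((∑ j, a j • M j) *ᵥ x) = ∑ j, a j * (x ⬝ᵥ (M j *ᵥ x)) := by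
  simp only [sum_mulVec, smul_mulVec, dotProduct_sum, dotProduct_smul, smul_eq_mul]

end LinearAlgebra

section RandomVectors

variable {Ω : Type*} [MeasurableSpace Ω] {μ : Measure Ω}

theorem memLp_dotProduct {κ : Type*} [Fintype κ] {p : ENNReal} {X : Ω → κ → ℝ}
    (hX : ∀ i, MemLp (fun ω => X ω i) p μ) (y : κ → ℝ) :
    MemLp (fun ω => y ⬝ᵥ X ω) p μ :=
  memLp_finsetSum _ fun i _ => (hX i).const_mul (y i)

theorem memLp_mulVec {κ κ' : Type*} [Fintype κ] {p : ENNReal} {X : Ω → κ → ℝ}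
    (hX : ∀ i, MemLp (fun ω => X ω i) p μ) (M : Matrix κ' κ ℝ) (i : κ') :
    MemLp (fun ω => (M *ᵥ X ω) i) p μ :=
  memLp_dotProduct hX (M i)

theorem memLp_sum_smul {ι κ : Type*} [Fintype ι] {p : ENNReal} {X : ι → Ω → κ → ℝ}
    (hX : ∀ j i, MemLp (fun ω => X j ω i) p μ) (a : ι → ℝ) (i : κ) :
    MemLp (fun ω => (∑ j, a j • X j ω) i) p μ := by
  simp only [Finset.sum_apply, Pi.smul_apply, smul_eq_mul]
  exact memLp_finsetSum _ fun j _ => (hX j i).const_mul (a j)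

theorem integral_sq_weighted_sum_le {ι : Type*} [Fintype ι] {f : ι → Ω → ℝ}
    (hf : ∀ j, MemLp (f j) 2 μ) {a : ι → ℝ} (ha : ∀ j, 0 ≤ a j) (hsum : ∑ j, a j = 1) :
    ∫ ω, (∑ j, a j * f j ω) ^ 2 ∂μ ≤ ∑ j, a j * ∫ ω, f j ω ^ 2 ∂μ := by
  have hsq : ∀ j, Integrable (fun ω => a j * f j ω ^ 2) μ :=
    fun j => (hf j).integrable_sq.const_mul (a j)
  calc ∫ ω, (∑ j, a j * f j ω) ^ 2 ∂μ ≤ ∫ ω, ∑ j, a j * f j ω ^ 2 ∂μ :=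
        integral_mono (memLp_finsetSum _ fun j _ => (hf j).const_mul (a j)).integrable_sq
          (integrable_finsetSum _ fun j _ => hsq j)
          fun ω => even_two.convexOn_pow.map_sum_le (p := (f · ω)) (fun j _ => ha j) hsum
            fun j _ => Set.mem_univ _
    _ = ∑ j, a j * ∫ ω, f j ω ^ 2 ∂μ := by
        rw [integral_finsetSum _ fun j _ => hsq j]
        exact Finset.sum_congr rfl fun j _ => integral_const_mul _ _

variable {n : ℕ}

theorem Eouter_isHermitian (X : Ω → Fin n → ℝ) : (Eouter μ X X).IsHermitian := by
  ext i j
  simp only [conjTranspose_apply, Eouter, of_apply, star_trivial, mul_comm]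

theorem dotProduct_Eouter_mulVec {m : ℕ} {X : Ω → Fin n → ℝ} {Y : Ω → Fin m → ℝ}
    (hX : ∀ i, MemLp (fun ω => X ω i) 2 μ) (hY : ∀ j, MemLp (fun ω => Y ω j) 2 μ)
    (x : Fin n → ℝ) (y : Fin m → ℝ) :
    x ⬝ᵥ (Eouter μ X Y *ᵥ y) = ∫ ω, (x ⬝ᵥ X ω) * (y ⬝ᵥ Y ω) ∂μ := by
  have hint : ∀ i j, Integrable (fun ω => x i * y j * (X ω i * Y ω j)) μ :=
    fun i j => ((hX i).integrable_mul (hY j)).const_mul _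
  calc x ⬝ᵥ (Eouter μ X Y *ᵥ y) = ∑ i, ∑ j, x i * y j * ∫ ω, X ω i * Y ω j ∂μ := by
        simp only [dotProduct, mulVec, Eouter, of_apply, Finset.mul_sum]
        exact Finset.sum_congr rfl fun i _ => Finset.sum_congr rfl fun j _ => by ring
    _ = ∫ ω, ∑ i, ∑ j, x i * y j * (X ω i * Y ω j) ∂μ := by
        rw [integral_finsetSum _ fun i _ => integrable_finsetSum _ fun j _ => hint i j]
        refine Finset.sum_congr rfl fun i _ => ?_
        rw [integral_finsetSum _ fun j _ => hint i j]
        exact Finset.sum_congr rfl fun j _ => (integral_const_mul _ _).symm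
    _ = ∫ ω, (x ⬝ᵥ X ω) * (y ⬝ᵥ Y ω) ∂μ := by
        simp only [dotProduct, Finset.sum_mul_sum]
        exact integral_congr_ae (Filter.Eventually.of_forall fun ω =>
          Finset.sum_congr rfl fun i _ => Finset.sum_congr rfl fun j _ => by ring)

theorem posSemidef_sub_Eouter_iff {P : Matrix (Fin n) (Fin n) ℝ} (hP : P.IsHermitian)
    {X : Ω → Fin n → ℝ} (hX : ∀ i, MemLp (fun ω => X ω i) 2 μ) :
    (P - Eouter μ X X).PosSemidef ↔ ∀ x, ∫ ω, (x ⬝ᵥ X ω) ^ 2 ∂μ ≤ x ⬝ᵥ (P *ᵥ x) := by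
  simp only [posSemidef_iff_dotProduct_mulVec, hP.sub (Eouter_isHermitian X), true_and,
    star_trivial, sub_mulVec, dotProduct_sub, sub_nonneg, dotProduct_Eouter_mulVec hX hX, sq]

end RandomVectors

theorem ci_fusion_consistent_general {Ω : Type*} [MeasurableSpace Ω] (μ : Measure Ω)
    {n N : ℕ} (etil : Fin N → Ω → Fin n → ℝ)
    (hL2 : ∀ j i, MemLp (fun ω => etil j ω i) 2 μ)
    (Ptil : Fin N → Matrix (Fin n) (Fin n) ℝ)
    (hPtil : ∀ j, (Ptil j).PosDef)
    (hcons : ∀ j, (Ptil j - Eouter μ (etil j) (etil j)).PosSemidef)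
    (a : Fin N → ℝ) (ha : ∀ j, 0 ≤ a j) (hsum : ∑ j, a j = 1)
    (hpos : ∃ j, 0 < a j) :
    ((∑ j, a j • (Ptil j)⁻¹)⁻¹
      - Eouter μ
          (fun ω => ((∑ j, a j • (Ptil j)⁻¹)⁻¹).mulVec
            (∑ j, a j • ((Ptil j)⁻¹.mulVec (etil j ω))))
          (fun ω => ((∑ j, a j • (Ptil j)⁻¹)⁻¹).mulVec
            (∑ j, a j • ((Ptil j)⁻¹.mulVec (etil j ω))))).PosSemidef := by
  set S := ∑ j, a j • (Ptil j)⁻¹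
  have hS : S.PosDef := posDef_sum_smul (fun j => (hPtil j).inv) ha hpos
  have hcov j := (posSemidef_sub_Eouter_iff (hPtil j).isHermitian (hL2 j)).mp (hcons j)
  rw [posSemidef_sub_Eouter_iff hS.inv.isHermitian
    (memLp_mulVec (memLp_sum_smul (fun j => memLp_mulVec (hL2 j) _) a) _)]
  intro x
  set w := S⁻¹ *ᵥ x
  have hfused : ∀ ω, x ⬝ᵥ (S⁻¹ *ᵥ ∑ j, a j • ((Ptil j)⁻¹ *ᵥ etil j ω))
      = ∑ j, a j * (((Ptil j)⁻¹ *ᵥ w) ⬝ᵥ etil j ω) := fun ω => by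
    rw [hS.inv.isHermitian.dotProduct_mulVec_comm, dotProduct_sum]
    exact Finset.sum_congr rfl fun j _ => by
      rw [dotProduct_smul, smul_eq_mul, (hPtil j).inv.isHermitian.dotProduct_mulVec_comm]
  calc ∫ ω, (x ⬝ᵥ (S⁻¹ *ᵥ ∑ j, a j • ((Ptil j)⁻¹ *ᵥ etil j ω))) ^ 2 ∂μ
      = ∫ ω, (∑ j, a j * (((Ptil j)⁻¹ *ᵥ w) ⬝ᵥ etil j ω)) ^ 2 ∂μ := by simp only [hfused]
    _ ≤ ∑ j, a j * ∫ ω, (((Ptil j)⁻¹ *ᵥ w) ⬝ᵥ etil j ω) ^ 2 ∂μ :=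
        integral_sq_weighted_sum_le (fun j => memLp_dotProduct (hL2 j) _) ha hsum
    _ ≤ ∑ j, a j * (((Ptil j)⁻¹ *ᵥ w) ⬝ᵥ (Ptil j *ᵥ ((Ptil j)⁻¹ *ᵥ w))) :=
        Finset.sum_le_sum fun j _ => mul_le_mul_of_nonneg_left (hcov j _) (ha j)
    _ = w ⬝ᵥ (S *ᵥ w) := by
        rw [dotProduct_sum_smul_mulVec]
        exact Finset.sum_congr rfl fun j _ => by
          rw [inv_mulVec_dotProduct_mulVec_inv_mulVec (hPtil j).isUnit]
    _ = x ⬝ᵥ (S⁻¹ *ᵥ x) := inv_mulVec_dotProduct_mulVec_inv_mulVec hS.isUnit x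

/-- Consistency of covariance-intersection fusion: if `E[ẽⱼ ẽⱼᵀ] ≤ P̃ⱼ` (all `P̃ⱼ`
positive definite) and `aⱼ ≥ 0` sum to 1 (at least one positive), then with
`P = (∑ⱼ aⱼ P̃ⱼ⁻¹)⁻¹` and `e = P ∑ⱼ aⱼ P̃ⱼ⁻¹ ẽⱼ`, one has `E[e eᵀ] ≤ P`. -/
theorem ci_fusion_consistent {Ω : Type*} [MeasurableSpace Ω] (μ : Measure Ω)
    [IsProbabilityMeasure μ] {n N : ℕ} (etil : Fin N → Ω → Fin n → ℝ)
    (hL2 : ∀ j i, MemLp (fun ω => etil j ω i) 2 μ)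
    (Ptil : Fin N → Matrix (Fin n) (Fin n) ℝ)
    (hPtil : ∀ j, (Ptil j).PosDef)
    (hcons : ∀ j, (Ptil j - Eouter μ (etil j) (etil j)).PosSemidef)
    (a : Fin N → ℝ) (ha : ∀ j, 0 ≤ a j) (hsum : ∑ j, a j = 1)
    (hpos : ∃ j, 0 < a j) :
    ((∑ j, a j • (Ptil j)⁻¹)⁻¹
      - Eouter μ
          (fun ω => ((∑ j, a j • (Ptil j)⁻¹)⁻¹).mulVec
            (∑ j, a j • ((Ptil j)⁻¹.mulVec (etil j ω))))
          (fun ω => ((∑ j, a j • (Ptil j)⁻¹)⁻¹).mulVec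
            (∑ j, a j • ((Ptil j)⁻¹.mulVec (etil j ω))))).PosSemidef :=
  ci_fusion_consistent_general μ etil hL2 Ptil hPtil hcons a ha hsum hpos
end

section
/- Covariance intersection inequality for two matrices: if P_1, P_2 are symmetric positive definite n×n matrices, a ∈ [0,1], and x_1, x_2 ∈ R^n, then (a P_1^{-1} + (1-a) P_2^{-1}) is positive definite and the fused vector x = (a P_1^{-1} + (1-a) P_2^{-1})^{-1}(a P_1^{-1} x_1 + (1-a) P_2^{-1} x_2) satisfies (x - z)(x - z)^T-consistency: for any z, if (x_1 - z)(x_1 - z)^T ≤ P_1 and (x_2 - z)(x_2 - z)^T ≤ P_2, then (x - z)(x - z)^T ≤ (a P_1^{-1} + (1-a) P_2^{-1})^{-1}. -/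
/-!
Write `Q = a P₁⁻¹ + (1 - a) P₂⁻¹`. The fused error is `x - z = Q⁻¹ u` with
`u = a P₁⁻¹ (x₁ - z) + (1 - a) P₂⁻¹ (x₂ - z)`. Congruence by `A⁻¹` turns `v vᵀ ≤ A`
into `(A⁻¹ v)(A⁻¹ v)ᵀ ≤ A⁻¹`, so `Pᵢ⁻¹` dominates `vᵢ vᵢᵀ` for `vᵢ = Pᵢ⁻¹ (xᵢ - z)`.
The set of pairs `(A, v)` with `v vᵀ ≤ A` is convex: for `u = a v₁ + (1 - a) v₂` the defect
`a v₁ v₁ᵀ + (1 - a) v₂ v₂ᵀ - u uᵀ = a (1 - a) (v₁ - v₂)(v₁ - v₂)ᵀ` is positive semidefinite.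
Hence `u uᵀ ≤ Q`, and a second congruence, by `Q⁻¹`, gives `(Q⁻¹ u)(Q⁻¹ u)ᵀ ≤ Q⁻¹`.
-/

open Matrix

namespace Matrix

variable {m : Type*}

theorem PosDef.smul_add_one_sub_smul {A B : Matrix m m ℝ} (hA : A.PosDef) (hB : B.PosDef)
    {a : ℝ} (ha0 : 0 ≤ a) (ha1 : a ≤ 1) : (a • A + (1 - a) • B).PosDef := by
  rcases ha0.lt_or_eq with ha | rfl
  · exact (hA.smul ha).add_posSemidef (hB.posSemidef.smul (sub_nonneg.2 ha1))
  · simpa using hB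

theorem PosSemidef.inv_sub_vecMulVec_inv_mulVec [Fintype m] [DecidableEq m]
    {A : Matrix m m ℝ} {x : m → ℝ}
    (h : (A - vecMulVec x x).PosSemidef) :
    (A⁻¹ - vecMulVec (A⁻¹ *ᵥ x) (A⁻¹ *ᵥ x)).PosSemidef := by
  by_cases hA : IsUnit A.det
  · have hAh : A.IsHermitian := by
      simpa using h.isHermitian.add (posSemidef_vecMulVec_self_star x).isHermitian
    have hsymm : A⁻¹ᵀ = A⁻¹ := by simpa using hAh.inv.eq
    have hcongr :
        A⁻¹ - vecMulVec (A⁻¹ *ᵥ x) (A⁻¹ *ᵥ x) = A⁻¹ * (A - vecMulVec x x) * A⁻¹ᴴ := by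
      rw [conjTranspose_eq_transpose_of_trivial, hsymm, mul_sub, sub_mul, nonsing_inv_mul _ hA,
        one_mul, mul_vecMulVec, vecMulVec_mul, ← mulVec_transpose, hsymm]
    rw [hcongr]
    exact h.mul_mul_conjTranspose_same _
  · simpa [nonsing_inv_apply_not_isUnit _ hA] using PosSemidef.zero

theorem PosSemidef.smul_add_one_sub_smul_sub_vecMulVec [Fintype m]
    {A₁ A₂ : Matrix m m ℝ} {x₁ x₂ : m → ℝ}
    (h₁ : (A₁ - vecMulVec x₁ x₁).PosSemidef) (h₂ : (A₂ - vecMulVec x₂ x₂).PosSemidef)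
    {a : ℝ} (ha0 : 0 ≤ a) (ha1 : a ≤ 1) :
    (a • A₁ + (1 - a) • A₂ -
      vecMulVec (a • x₁ + (1 - a) • x₂) (a • x₁ + (1 - a) • x₂)).PosSemidef := by
  have hsplit :
      a • A₁ + (1 - a) • A₂ - vecMulVec (a • x₁ + (1 - a) • x₂) (a • x₁ + (1 - a) • x₂) =
        a • (A₁ - vecMulVec x₁ x₁) + (1 - a) • (A₂ - vecMulVec x₂ x₂)
          + (a * (1 - a)) • vecMulVec (x₁ - x₂) (x₁ - x₂) := by
    ext i j
    simp only [sub_apply, add_apply, smul_apply, vecMulVec_apply, Pi.add_apply, Pi.sub_apply,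
      Pi.smul_apply, smul_eq_mul]
    ring
  rw [hsplit]
  exact ((h₁.smul ha0).add (h₂.smul (sub_nonneg.2 ha1))).add
    ((posSemidef_vecMulVec_self_star _).smul (mul_nonneg ha0 (sub_nonneg.2 ha1)))

end Matrix

/-- Covariance intersection inequality for two matrices: for positive definite
`P₁, P₂`, `a ∈ [0,1]` and any `x₁, x₂, z`, the matrix `a P₁⁻¹ + (1-a) P₂⁻¹` is
positive definite, and if `(x₁-z)(x₁-z)ᵀ ≤ P₁` and `(x₂-z)(x₂-z)ᵀ ≤ P₂` then the
fused vector `x = (a P₁⁻¹ + (1-a) P₂⁻¹)⁻¹ (a P₁⁻¹ x₁ + (1-a) P₂⁻¹ x₂)` satisfies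
`(x-z)(x-z)ᵀ ≤ (a P₁⁻¹ + (1-a) P₂⁻¹)⁻¹`. -/
theorem covariance_intersection_two {n : ℕ}
    (P₁ P₂ : Matrix (Fin n) (Fin n) ℝ) (hP₁ : P₁.PosDef) (hP₂ : P₂.PosDef)
    (a : ℝ) (ha0 : 0 ≤ a) (ha1 : a ≤ 1) (x₁ x₂ z : Fin n → ℝ) :
    (a • P₁⁻¹ + (1 - a) • P₂⁻¹).PosDef ∧
    ((P₁ - vecMulVec (x₁ - z) (x₁ - z)).PosSemidef →
     (P₂ - vecMulVec (x₂ - z) (x₂ - z)).PosSemidef →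
      ((a • P₁⁻¹ + (1 - a) • P₂⁻¹)⁻¹
        - vecMulVec
            ((a • P₁⁻¹ + (1 - a) • P₂⁻¹)⁻¹.mulVec
              (a • P₁⁻¹.mulVec x₁ + (1 - a) • P₂⁻¹.mulVec x₂) - z)
            ((a • P₁⁻¹ + (1 - a) • P₂⁻¹)⁻¹.mulVec
              (a • P₁⁻¹.mulVec x₁ + (1 - a) • P₂⁻¹.mulVec x₂) - z)).PosSemidef) := by
  set Q := a • P₁⁻¹ + (1 - a) • P₂⁻¹ with hQ_def
  have hQ : Q.PosDef := hP₁.inv.smul_add_one_sub_smul hP₂.inv ha0 ha1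
  refine ⟨hQ, fun h₁ h₂ => ?_⟩
  have hfused : Q⁻¹ *ᵥ (a • P₁⁻¹ *ᵥ x₁ + (1 - a) • P₂⁻¹ *ᵥ x₂) - z
      = Q⁻¹ *ᵥ (a • P₁⁻¹ *ᵥ (x₁ - z) + (1 - a) • P₂⁻¹ *ᵥ (x₂ - z)) := by
    have hcentered : a • P₁⁻¹ *ᵥ (x₁ - z) + (1 - a) • P₂⁻¹ *ᵥ (x₂ - z)
        = (a • P₁⁻¹ *ᵥ x₁ + (1 - a) • P₂⁻¹ *ᵥ x₂) - Q *ᵥ z := by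
      simp only [hQ_def, add_mulVec, smul_mulVec, mulVec_sub]
      module
    rw [hcentered, mulVec_sub, mulVec_mulVec,
      nonsing_inv_mul _ ((isUnit_iff_isUnit_det Q).1 hQ.isUnit), one_mulVec]
  rw [hfused]
  exact (h₁.inv_sub_vecMulVec_inv_mulVec.smul_add_one_sub_smul_sub_vecMulVec
    h₂.inv_sub_vecMulVec_inv_mulVec ha0 ha1).inv_sub_vecMulVec_inv_mulVec
end

section
/- Positive definiteness propagates through the ESDKF recursion: if P_{k-1,i} > 0 for all sensors i, A_{k-1} is invertible, θ > 0, Q_{k-1} ≥ 0, Q̄_{k-1} ≥ 0, R_{k,i} > 0, and the weights a_{i,j}(k) are nonnegative with a_{i,i}(k) > 0 and rows summing to 1, then P̄_{k,i} > 0, P̃_{k,i} > 0, and P_{k,i} = (∑_{j ∈ N_i} a_{i,j}(k) P̃_{k,j}^{-1})^{-1} > 0 for all i. -/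
/-!
The prediction step adds positive semidefinite terms to a congruence `A P Aᵀ` of a positive
definite matrix by an invertible one. By the Woodbury identity the measurement update equals
`(P̄⁻¹ + Hᵀ R⁻¹ H)⁻¹`, the inverse of a positive definite information matrix. Fusion sums
positive semidefinite information matrices `a_{ij} P̃_j⁻¹`, the own term `a_{ii} P̃_i⁻¹` being
positive definite.
-/

open Matrix

namespace Matrix

variable {n m : Type*} [Fintype n] [DecidableEq n] [Fintype m] [DecidableEq m]

theorem kalman_update_eq_inv_information {α : Type*} [CommRing α] {P : Matrix n n α}
    {R : Matrix m m α} (U : Matrix n m α) (V : Matrix m n α) (hP : IsUnit P) (hR : IsUnit R)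
    (hS : IsUnit (V * P * U + R)) :
    (1 - P * U * (V * P * U + R)⁻¹ * V) * P = (P⁻¹ + U * R⁻¹ * V)⁻¹ := by
  have hPP : P⁻¹⁻¹ = P := nonsing_inv_nonsing_inv P ((isUnit_iff_isUnit_det P).1 hP)
  have hRR : R⁻¹⁻¹ = R := nonsing_inv_nonsing_inv R ((isUnit_iff_isUnit_det R).1 hR)
  rw [add_mul_mul_inv_eq_sub _ _ _ _ (isUnit_nonsing_inv_iff.2 hP) (isUnit_nonsing_inv_iff.2 hR)
    (by rwa [hPP, hRR, add_comm]), hPP, hRR, add_comm R, Matrix.sub_mul, Matrix.one_mul]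

theorem PosDef.kalman_update {P : Matrix n n ℝ} {R : Matrix m m ℝ}
    (hP : P.PosDef) (hR : R.PosDef) (H : Matrix m n ℝ) :
    ((1 - P * Hᵀ * (H * P * Hᵀ + R)⁻¹ * H) * P).PosDef := by
  have hS : (H * P * Hᵀ + R).PosDef := by
    simpa using PosDef.posSemidef_add (hP.posSemidef.mul_mul_conjTranspose_same H) hR
  rw [kalman_update_eq_inv_information Hᵀ H hP.isUnit hR.isUnit hS.isUnit]
  exact (hP.inv.add_posSemidef (by simpa using hR.inv.posSemidef.conjTranspose_mul_mul_same H)).inv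

theorem PosDef.mul_mul_transpose_of_isUnit {P A : Matrix n n ℝ} (hP : P.PosDef) (hA : IsUnit A) :
    (A * P * Aᵀ).PosDef := by
  simpa [star_eq_conjTranspose] using (IsUnit.posDef_star_right_conjugate_iff hA).2 hP

theorem PosDef.inflated_prediction {P Q Qbar : Matrix n n ℝ} (hP : P.PosDef) {A : Matrix n n ℝ}
    (hA : IsUnit A) {θ : ℝ} (hθ : 0 < θ) (hQ : Q.PosSemidef) (hQbar : Qbar.PosSemidef) :
    ((1 + θ) • (A * P * Aᵀ) + ((1 + θ) / θ) • Qbar + Q).PosDef :=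
  (((hP.mul_mul_transpose_of_isUnit hA).smul (by linarith)).add_posSemidef
    (hQbar.smul (by positivity))).add_posSemidef hQ

theorem posDef_inv_sum_smul_inv {ι : Type*} [Fintype ι] [DecidableEq ι] {P : ι → Matrix n n ℝ}
    (hP : ∀ j, (P j).PosDef) {a : ι → ℝ} (ha : ∀ j, 0 ≤ a j) {i : ι} (hi : 0 < a i) :
    ((∑ j, a j • (P j)⁻¹)⁻¹).PosDef := by
  rw [← Finset.add_sum_erase _ _ (Finset.mem_univ i)]
  refine (((hP i).inv.smul hi).add_posSemidef ?_).inv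
  exact posSemidef_sum _ fun j _ => (hP j).inv.posSemidef.smul (ha j)

end Matrix

theorem esdkf_posdef_propagates_general {n N : ℕ} {m : Fin N → ℕ}
    (Pprev : Fin N → Matrix (Fin n) (Fin n) ℝ) (hPprev : ∀ i, (Pprev i).PosDef)
    (A : Matrix (Fin n) (Fin n) ℝ) (hA : IsUnit A)
    (θ : ℝ) (hθ : 0 < θ)
    (Q Qbar : Matrix (Fin n) (Fin n) ℝ)
    (hQ : Q.PosSemidef) (hQbar : Qbar.PosSemidef)
    (H : (i : Fin N) → Matrix (Fin (m i)) (Fin n) ℝ)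
    (R : (i : Fin N) → Matrix (Fin (m i)) (Fin (m i)) ℝ)
    (hR : ∀ i, (R i).PosDef)
    (a : Fin N → Fin N → ℝ) (ha : ∀ i j, 0 ≤ a i j)
    (hdiag : ∀ i, 0 < a i i)
    -- ESDKF recursion
    (Pbar : Fin N → Matrix (Fin n) (Fin n) ℝ)
    (hPbar : ∀ i, Pbar i = (1 + θ) • (A * Pprev i * Aᵀ) + ((1 + θ) / θ) • Qbar + Q)
    (K : (i : Fin N) → Matrix (Fin n) (Fin (m i)) ℝ)
    (hK : ∀ i, K i = Pbar i * (H i)ᵀ * (H i * Pbar i * (H i)ᵀ + R i)⁻¹)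
    (Ptil : Fin N → Matrix (Fin n) (Fin n) ℝ)
    (hPtil : ∀ i, Ptil i = (1 - K i * H i) * Pbar i) :
    ∀ i, (Pbar i).PosDef ∧ (Ptil i).PosDef ∧
      ((∑ j, a i j • (Ptil j)⁻¹)⁻¹).PosDef := by
  have hPbar_pd (i : Fin N) : (Pbar i).PosDef :=
    hPbar i ▸ (hPprev i).inflated_prediction hA hθ hQ hQbar
  have hPtil_pd (i : Fin N) : (Ptil i).PosDef := by
    rw [hPtil i, hK i]
    exact (hPbar_pd i).kalman_update (hR i) (H i)
  exact fun i => ⟨hPbar_pd i, hPtil_pd i, posDef_inv_sum_smul_inv hPtil_pd (ha i) (hdiag i)⟩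

/-- Positive definiteness propagates through the ESDKF recursion: if all
`P_{k-1,i} > 0`, `A_{k-1}` invertible, `θ > 0`, `Q_{k-1} ≥ 0`, `Q̄_{k-1} ≥ 0`,
`R_{k,i} > 0`, and the weights are nonnegative with positive diagonal and rows
summing to 1, then `P̄_{k,i} > 0`, `P̃_{k,i} > 0` and
`P_{k,i} = (∑ⱼ a_{i,j} P̃_{k,j}⁻¹)⁻¹ > 0` for every `i`. -/
theorem esdkf_posdef_propagates {n N : ℕ} {m : Fin N → ℕ}
    (Pprev : Fin N → Matrix (Fin n) (Fin n) ℝ) (hPprev : ∀ i, (Pprev i).PosDef)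
    (A : Matrix (Fin n) (Fin n) ℝ) (hA : IsUnit A)
    (θ : ℝ) (hθ : 0 < θ)
    (Q Qbar : Matrix (Fin n) (Fin n) ℝ)
    (hQ : Q.PosSemidef) (hQbar : Qbar.PosSemidef)
    (H : (i : Fin N) → Matrix (Fin (m i)) (Fin n) ℝ)
    (R : (i : Fin N) → Matrix (Fin (m i)) (Fin (m i)) ℝ)
    (hR : ∀ i, (R i).PosDef)
    (a : Fin N → Fin N → ℝ) (ha : ∀ i j, 0 ≤ a i j)
    (hdiag : ∀ i, 0 < a i i) (hrow : ∀ i, ∑ j, a i j = 1)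
    -- ESDKF recursion
    (Pbar : Fin N → Matrix (Fin n) (Fin n) ℝ)
    (hPbar : ∀ i, Pbar i = (1 + θ) • (A * Pprev i * Aᵀ) + ((1 + θ) / θ) • Qbar + Q)
    (K : (i : Fin N) → Matrix (Fin n) (Fin (m i)) ℝ)
    (hK : ∀ i, K i = Pbar i * (H i)ᵀ * (H i * Pbar i * (H i)ᵀ + R i)⁻¹)
    (Ptil : Fin N → Matrix (Fin n) (Fin n) ℝ)
    (hPtil : ∀ i, Ptil i = (1 - K i * H i) * Pbar i) :
    ∀ i, (Pbar i).PosDef ∧ (Ptil i).PosDef ∧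
      ((∑ j, a i j • (Ptil j)⁻¹)⁻¹).PosDef :=
  esdkf_posdef_propagates_general Pprev hPprev A hA θ hθ Q Qbar hQ hQbar H R hR a ha hdiag Pbar
    hPbar K hK Ptil hPtil
end
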